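/- Let z ∈ ℂ. Let P = (P_n)_{n≥-1} be the solution of the Jacobi equation at z with P_{-1} = 0, P_0 = 1, and let f = (f_n)_{n≥-1} and f' = (f'_n)_{n≥-1} be complex sequences such that f is a solution of the Jacobi equation at z and f' satisfies the differentiated equation a_{n-1} f'_{n-1} + b_n f'_n + a_n f'_{n+1} = z f'_n + f_n for all n ≥ 0 (with a_{-1} = 1/2). Then for every N ≥ 0, ∑_{n=0}^{N} f_n P_n = (1/2) f'_{-1} + a_N (P_N f'_{N+1} - P_{N+1} f'_N). -/

import Mathlib

/-! The Wronskian `W_n = a_n (P_n f'_{n+1} - P_{n+1} f'_n)` obeys the discrete Green identity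
`W_n - W_{n-1} = f_n P_n`, so the sum telescopes to `W_N - W_{-1}`; and
`W_{-1} = -f'_{-1}/2` because `a_{-1} = 1/2`, `P_{-1} = 0`, `P_0 = 1`. -/

open Filter Finset MeasureTheory

noncomputable section

/-- Extended coefficient sequence with `a₋₁ = 1/2`. -/
def aext (a : ℕ → ℝ) : ℤ → ℝ := fun k => if k < 0 then 1/2 else a k.toNat

/-- `u : ℤ → ℂ` (restricted to indices `n ≥ -1`) solves the Jacobi equation
`a_{n-1} u_{n-1} + b_n u_n + a_n u_{n+1} = z u_n` for all `n ≥ 0`, with `a_{-1} = 1/2`. -/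
def IsJacobiSol (a b : ℕ → ℝ) (z : ℂ) (u : ℤ → ℂ) : Prop :=
  ∀ n : ℕ, (aext a ((n : ℤ) - 1) : ℂ) * u ((n : ℤ) - 1) + (b n : ℂ) * u (n : ℤ)
      + (a n : ℂ) * u ((n : ℤ) + 1) = z * u (n : ℤ)

/-- The perturbation `V = H - H₀` applied to a sequence:
`(Vf)_m = (a_{m-1} - 1/2) f_{m-1} + b_m f_m + (a_m - 1/2) f_{m+1}` with `a_{-1} = 1/2`. -/
def jV (a b : ℕ → ℝ) (f : ℤ → ℂ) (m : ℕ) : ℂ :=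
  ((aext a ((m : ℤ) - 1) - 1/2 : ℝ) : ℂ) * f ((m : ℤ) - 1) + (b m : ℂ) * f (m : ℤ)
    + ((a m - 1/2 : ℝ) : ℂ) * f ((m : ℤ) + 1)

lemma aext_neg_one (a : ℕ → ℝ) : aext a (-1) = 1/2 := by simp [aext]

lemma aext_natCast (a : ℕ → ℝ) (n : ℕ) : aext a (n : ℤ) = a n := by simp [aext]

def jacobiWronskian (a : ℕ → ℝ) (u v : ℤ → ℂ) (n : ℤ) : ℂ :=
  (aext a n : ℂ) * (u n * v (n + 1) - u (n + 1) * v n)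

lemma jacobiWronskian_neg_one (a : ℕ → ℝ) (u v : ℤ → ℂ) :
    jacobiWronskian a u v (-1) = (1/2) * (u (-1) * v 0 - u 0 * v (-1)) := by
  simp [jacobiWronskian, aext_neg_one]

lemma jacobiWronskian_sub_jacobiWronskian_pred {a b : ℕ → ℝ} {z : ℂ} {u v g : ℤ → ℂ}
    (hu : IsJacobiSol a b z u)
    (hv : ∀ n : ℕ, (aext a ((n : ℤ) - 1) : ℂ) * v ((n : ℤ) - 1) + (b n : ℂ) * v (n : ℤ)
        + (a n : ℂ) * v ((n : ℤ) + 1) = z * v (n : ℤ) + g (n : ℤ)) (n : ℕ) :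
    jacobiWronskian a u v n - jacobiWronskian a u v ((n : ℤ) - 1) = g n * u n := by
  simp only [jacobiWronskian, aext_natCast, sub_add_cancel]
  linear_combination u n * hv n - v n * hu n

lemma sum_range_mul_eq_jacobiWronskian_sub {a b : ℕ → ℝ} {z : ℂ} {u v g : ℤ → ℂ}
    (hu : IsJacobiSol a b z u)
    (hv : ∀ n : ℕ, (aext a ((n : ℤ) - 1) : ℂ) * v ((n : ℤ) - 1) + (b n : ℂ) * v (n : ℤ)
        + (a n : ℂ) * v ((n : ℤ) + 1) = z * v (n : ℤ) + g (n : ℤ)) (N : ℕ) :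
    ∑ n ∈ range (N + 1), g n * u n = jacobiWronskian a u v N - jacobiWronskian a u v (-1) := by
  have htele := sum_range_sub (fun k : ℕ => jacobiWronskian a u v ((k : ℤ) - 1)) (N + 1)
  simp only [Nat.cast_add, Nat.cast_one, add_sub_cancel_right, Nat.cast_zero, zero_sub] at htele
  rw [← htele]
  exact sum_congr rfl fun n _ => (jacobiWronskian_sub_jacobiWronskian_pred hu hv n).symm

theorem summation_identity_general
    (a b : ℕ → ℝ) (z : ℂ)
    (P : ℤ → ℂ) (hP : IsJacobiSol a b z P) (hPm : P (-1) = 0) (hP0 : P 0 = 1)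
    (f : ℤ → ℂ)
    (f' : ℤ → ℂ)
    (hf' : ∀ n : ℕ, (aext a ((n : ℤ) - 1) : ℂ) * f' ((n : ℤ) - 1) + (b n : ℂ) * f' (n : ℤ)
        + (a n : ℂ) * f' ((n : ℤ) + 1) = z * f' (n : ℤ) + f (n : ℤ)) :
    ∀ N : ℕ, ∑ n ∈ Finset.range (N + 1), f (n : ℤ) * P (n : ℤ)
      = (1/2) * f' (-1)
        + (a N : ℂ) * (P (N : ℤ) * f' ((N : ℤ) + 1) - P ((N : ℤ) + 1) * f' (N : ℤ)) := by
  intro N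
  rw [sum_range_mul_eq_jacobiWronskian_sub hP hf' N, jacobiWronskian_neg_one, hPm, hP0,
    jacobiWronskian, aext_natCast]
  ring

/-- the summation identity
`∑_{n=0}^N f_n P_n = (1/2) f'_{-1} + a_N (P_N f'_{N+1} - P_{N+1} f'_N)`, where `f'`
satisfies the differentiated Jacobi equation. -/
theorem summation_identity
    (a b : ℕ → ℝ) (ha : ∀ n, 0 < a n) (z : ℂ)
    (P : ℤ → ℂ) (hP : IsJacobiSol a b z P) (hPm : P (-1) = 0) (hP0 : P 0 = 1)
    (f : ℤ → ℂ) (hf : IsJacobiSol a b z f)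
    (f' : ℤ → ℂ)
    (hf' : ∀ n : ℕ, (aext a ((n : ℤ) - 1) : ℂ) * f' ((n : ℤ) - 1) + (b n : ℂ) * f' (n : ℤ)
        + (a n : ℂ) * f' ((n : ℤ) + 1) = z * f' (n : ℤ) + f (n : ℤ)) :
    ∀ N : ℕ, ∑ n ∈ Finset.range (N + 1), f (n : ℤ) * P (n : ℤ)
      = (1/2) * f' (-1)
        + (a N : ℂ) * (P (N : ℤ) * f' ((N : ℤ) + 1) - P ((N : ℤ) + 1) * f' (N : ℤ)) :=
  summation_identity_general a b z P hP hPm hP0 f f' hf'
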